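/- Let F: U → ℝᵐ be a single-valued mapping, U ⊆ ℝⁿ open, x̄ ∈ U. (i) If F is strictly continuous at x̄ and gph D_*F(x̄) is a linear subspace, then dim gph D_*F(x̄) = n and D_*F(x̄) is a (single-valued) linear mapping from ℝⁿ to ℝᵐ. (ii) If F is strictly continuous at x̄ and gph D*F(x̄) is a linear subspace, then dim gph D*F(x̄) = m and D*F(x̄) is a (single-valued) linear mapping from ℝᵐ to ℝⁿ. (iii) If F is calm at x̄ and gph DF(x̄) is a linear subspace, then dim gph DF(x̄) = n and DF(x̄) is a (single-valued) linear mapping from ℝⁿ to ℝᵐ. -/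

import Mathlib

/-! Calmness (resp. local Lipschitz continuity) bounds every element `(u, v)` of the graphical
(resp. strict) derivative by `‖v‖ ≤ κ ‖u‖`, and every element `(y*, x*)` of the coderivative by
`‖x*‖ ≤ κ ‖y*‖`, since regular normals are polar to tangent vectors of slope at most `κ`.
So a linear subspace among these graphs meets the second factor only in `0`. Its projection onto
the first factor is onto: tangent directions exist because difference quotients of `f` are
bounded, hence have convergent subsequences; and for each `y*`, minimising the penalised
scalarisation `⟪y*, f ·⟫ + ‖· - x̄‖² / δ` gives, by Fermat's rule, regular normals `(x*_δ, -y*)`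
at points converging to `x̄` as `δ → 0`, with `x*_δ` bounded by `2 κ ‖y*‖`. A subspace with both
properties is the graph of a linear map, of dimension that of its domain. -/

open Filter Topology Metric Set
open scoped RealInnerProductSpace NNReal ENNReal

noncomputable section

/-- Euclidean space `ℝⁿ`. -/
abbrev Euc (n : ℕ) : Type := EuclideanSpace ℝ (Fin n)

section NormedDefs

variable {X Y : Type*} [NormedAddCommGroup X] [NormedSpace ℝ X]
  [NormedAddCommGroup Y] [NormedSpace ℝ Y]

/-- The (Bouligand) tangent cone to `Ω` at `z`. -/
def tanCone (Ω : Set X) (z : X) : Set X :=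
  {w | ∃ (t : ℕ → ℝ) (wk : ℕ → X), (∀ k, 0 < t k) ∧ Tendsto t atTop (𝓝 0) ∧
      Tendsto wk atTop (𝓝 w) ∧ ∀ k, z + t k • wk k ∈ Ω}

/-- The regular (Clarke) tangent cone to `Ω` at `z`. -/
def clarkeCone (Ω : Set X) (z : X) : Set X :=
  {w | ∀ (zk : ℕ → X) (t : ℕ → ℝ), (∀ k, zk k ∈ Ω) → Tendsto zk atTop (𝓝 z) →
      (∀ k, 0 < t k) → Tendsto t atTop (𝓝 0) →
      ∃ wk : ℕ → X, Tendsto wk atTop (𝓝 w) ∧ ∀ k, zk k + t k • wk k ∈ Ω}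

/-- The paratingent cone to `Ω` at `z`. -/
def paraCone (Ω : Set X) (z : X) : Set X :=
  {w | ∃ (zk : ℕ → X) (t : ℕ → ℝ) (wk : ℕ → X), (∀ k, zk k ∈ Ω) ∧
      Tendsto zk atTop (𝓝 z) ∧ (∀ k, 0 < t k) ∧ Tendsto t atTop (𝓝 0) ∧
      Tendsto wk atTop (𝓝 w) ∧ ∀ k, zk k + t k • wk k ∈ Ω}

/-- `Ω` is strictly smooth at `z` if the Clarke tangent cone and the paratingent
cone coincide there. -/
def StrictlySmoothAt (Ω : Set X) (z : X) : Prop := clarkeCone Ω z = paraCone Ω z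

/-- `Ω` is geometrically derivable at `z`. -/
def GeomDerivableAt (Ω : Set X) (z : X) : Prop :=
  ∀ w ∈ tanCone Ω z, ∀ t : ℕ → ℝ, (∀ k, 0 < t k) → Tendsto t atTop (𝓝 0) →
    ∃ wk : ℕ → X, Tendsto wk atTop (𝓝 w) ∧ ∀ k, z + t k • wk k ∈ Ω

/-- `Ω` is locally closed at `z`. -/
def LocallyClosedAt (Ω : Set X) (z : X) : Prop :=
  ∃ V : Set X, V ∈ 𝓝 z ∧ IsClosed V ∧ IsClosed (Ω ∩ V)

/-- The set `s` is a linear subspace. -/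
def IsLinearSubspace (s : Set X) : Prop := ∃ S : Submodule ℝ X, (S : Set X) = s

/-- The set `s` is a linear subspace of dimension `d`. -/
def HasDim (s : Set X) (d : ℕ) : Prop :=
  ∃ S : Submodule ℝ X, (S : Set X) = s ∧ Module.finrank ℝ S = d

/-- The graph of a set-valued mapping. -/
def gphOf (Fm : X → Set Y) : Set (X × Y) := {p | p.2 ∈ Fm p.1}

/-- The graph of a single-valued mapping defined on `U`. -/
def gphOn (f : X → Y) (U : Set X) : Set (X × Y) := {p | p.1 ∈ U ∧ p.2 = f p.1}

/-- `f` (defined on `U`) is strictly continuous (locally Lipschitz) at `xb`. -/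
def StrictlyContinuousAt' (f : X → Y) (U : Set X) (xb : X) : Prop :=
  ∃ U' ∈ 𝓝 xb, U' ⊆ U ∧ ∃ κ : ℝ, 0 ≤ κ ∧
    ∀ x ∈ U', ∀ x' ∈ U', ‖f x - f x'‖ ≤ κ * ‖x - x'‖

/-- `f` (defined on `U`) is calm at `xb`. -/
def CalmAt' (f : X → Y) (U : Set X) (xb : X) : Prop :=
  ∃ U' ∈ 𝓝 xb, U' ⊆ U ∧ ∃ κ : ℝ, 0 ≤ κ ∧ ∀ x ∈ U', ‖f x - f xb‖ ≤ κ * ‖x - xb‖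

/-- `f` (defined on `U`) is strictly differentiable at `xb`. -/
def StrictDiffOnAt (f : X → Y) (U : Set X) (xb : X) : Prop :=
  ∃ A : X →L[ℝ] Y, ∀ ε : ℝ, 0 < ε → ∃ δ > 0, ∀ x ∈ U, ∀ x' ∈ U,
    ‖x - xb‖ < δ → ‖x' - xb‖ < δ → ‖f x' - f x - A (x' - x)‖ ≤ ε * ‖x' - x‖

/-- `f` (defined on `U`) is Fréchet differentiable at `xb`. -/
def FrechetDiffOnAt (f : X → Y) (U : Set X) (xb : X) : Prop :=
  ∃ A : X →L[ℝ] Y, ∀ ε : ℝ, 0 < ε → ∃ δ > 0, ∀ x ∈ U,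
    ‖x - xb‖ < δ → ‖f x - f xb - A (x - xb)‖ ≤ ε * ‖x - xb‖

/-- The B-Jacobian (Bouligand limiting Jacobian) of `f` at `xb`. -/
def BJacobian (f : X → Y) (U : Set X) (xb : X) : Set (X →L[ℝ] Y) :=
  {A | ∃ (xk : ℕ → X) (Ak : ℕ → X →L[ℝ] Y),
      (∀ k, xk k ∈ U ∧ HasFDerivAt f (Ak k) (xk k)) ∧
      Tendsto xk atTop (𝓝 xb) ∧ Tendsto Ak atTop (𝓝 A)}

/-- `Ω ⊆ X` is a Lipschitz manifold of dimension `d` (and codimension `c`) around `z`: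
up to a `C¹` change of coordinates `Φ`, `Ω` locally coincides with the graph of a
Lipschitz mapping `f : U → ℝᶜ`, `U ⊆ ℝᵈ` open. -/
def IsLipschitzManifoldAt (Ω : Set X) (d c : ℕ) (z : X) : Prop :=
  ∃ (W : Set X) (Φ : X → Euc d × Euc c) (Ψ : Euc d × Euc c → X)
    (U : Set (Euc d)) (f : Euc d → Euc c) (K : ℝ≥0),
    IsOpen W ∧ z ∈ W ∧ IsOpen (Φ '' W) ∧
    ContDiffOn ℝ 1 Φ W ∧ ContDiffOn ℝ 1 Ψ (Φ '' W) ∧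
    (∀ x ∈ W, Ψ (Φ x) = x) ∧ (∀ y ∈ Φ '' W, Φ (Ψ y) = y) ∧
    IsOpen U ∧ LipschitzOnWith K f U ∧
    Φ '' (Ω ∩ W) = {p | p.1 ∈ U ∧ p.2 = f p.1}

/-- As `IsLipschitzManifoldAt`, with the Lipschitz mapping `f` moreover strictly
differentiable at the transformed reference point. -/
def IsGraphStrictDiffAt (Ω : Set X) (d c : ℕ) (z : X) : Prop :=
  ∃ (W : Set X) (Φ : X → Euc d × Euc c) (Ψ : Euc d × Euc c → X)
    (U : Set (Euc d)) (f : Euc d → Euc c) (K : ℝ≥0),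
    IsOpen W ∧ z ∈ W ∧ IsOpen (Φ '' W) ∧
    ContDiffOn ℝ 1 Φ W ∧ ContDiffOn ℝ 1 Ψ (Φ '' W) ∧
    (∀ x ∈ W, Ψ (Φ x) = x) ∧ (∀ y ∈ Φ '' W, Φ (Ψ y) = y) ∧
    IsOpen U ∧ LipschitzOnWith K f U ∧
    Φ '' (Ω ∩ W) = {p | p.1 ∈ U ∧ p.2 = f p.1} ∧
    StrictDiffOnAt f U (Φ z).1

/-- Strong metric subregularity of a set-valued mapping at `(xb, yb)`. -/
def StronglySubregAt (Fm : X → Set Y) (xb : X) (yb : Y) : Prop :=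
  ∃ κ : ℝ≥0, ∃ U ∈ 𝓝 xb, ∀ x ∈ U,
    (‖x - xb‖₊ : ℝ≥0∞) ≤ (κ : ℝ≥0∞) * EMetric.infEdist yb (Fm x)

/-- Metric regularity of a set-valued mapping around `(xb, yb)`. -/
def MetricallyRegularAround (Fm : X → Set Y) (xb : X) (yb : Y) : Prop :=
  ∃ κ : ℝ≥0, ∃ U ∈ 𝓝 xb, ∃ V ∈ 𝓝 yb, ∀ x ∈ U, ∀ y ∈ V,
    EMetric.infEdist x {x' | y ∈ Fm x'} ≤ (κ : ℝ≥0∞) * EMetric.infEdist y (Fm x)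

/-- Strong metric regularity of a set-valued mapping around `(xb, yb)`. -/
def StronglyRegularAround (Fm : X → Set Y) (xb : X) (yb : Y) : Prop :=
  MetricallyRegularAround Fm xb yb ∧
  ∃ (U' : Set X) (V' : Set Y) (h : Y → X), IsOpen U' ∧ IsOpen V' ∧
    xb ∈ U' ∧ yb ∈ V' ∧ h yb = xb ∧
    gphOf Fm ∩ (U' ×ˢ V') = {p | p.2 ∈ V' ∧ p.1 = h p.2}

end NormedDefs

section InnerDefs

variable {E F : Type*} [NormedAddCommGroup E] [InnerProductSpace ℝ E]
  [NormedAddCommGroup F] [InnerProductSpace ℝ F]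

/-- The regular (Fréchet) normal cone: the polar of the tangent cone. -/
def regNormal (Ω : Set E) (z : E) : Set E := {v | ∀ w ∈ tanCone Ω z, ⟪v, w⟫ ≤ 0}

/-- The limiting (Mordukhovich) normal cone. -/
def limNormal (Ω : Set E) (z : E) : Set E :=
  {v | ∃ zk vk : ℕ → E, (∀ k, zk k ∈ Ω) ∧ Tendsto zk atTop (𝓝 z) ∧
      (∀ k, vk k ∈ regNormal Ω (zk k)) ∧ Tendsto vk atTop (𝓝 v)}

/-- `Ω` is normally regular at `z`. -/
def NormallyRegularAt (Ω : Set E) (z : E) : Prop := regNormal Ω z = limNormal Ω z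

/-- The orthogonal complement (as a set) of a set. -/
def orthSet (s : Set E) : Set E := {v | ∀ w ∈ s, ⟪v, w⟫ = 0}

/-- `Ω` is semismooth* at `zb`. -/
def SemismoothStarAt (Ω : Set E) (zb : E) : Prop :=
  ∀ ε : ℝ, 0 < ε → ∃ δ > 0, ∀ z ∈ Ω, ‖z - zb‖ < δ → ∀ v ∈ limNormal Ω z,
    |⟪v, z - zb⟫| ≤ ε * ‖z - zb‖ * ‖v‖

/-- The canonical inner product of the product of two inner product spaces. -/
def inner2 (p q : E × F) : ℝ := ⟪p.1, q.1⟫ + ⟪p.2, q.2⟫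

/-- The regular normal cone for subsets of a product space. -/
def regNormal2 (Ω : Set (E × F)) (z : E × F) : Set (E × F) :=
  {v | ∀ w ∈ tanCone Ω z, inner2 v w ≤ 0}

/-- The limiting normal cone for subsets of a product space. -/
def limNormal2 (Ω : Set (E × F)) (z : E × F) : Set (E × F) :=
  {v | ∃ zk vk : ℕ → E × F, (∀ k, zk k ∈ Ω) ∧ Tendsto zk atTop (𝓝 z) ∧
      (∀ k, vk k ∈ regNormal2 Ω (zk k)) ∧ Tendsto vk atTop (𝓝 v)}

/-- Normal regularity for subsets of a product space. -/
def NormallyRegular2At (Ω : Set (E × F)) (z : E × F) : Prop :=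
  regNormal2 Ω z = limNormal2 Ω z

/-- Orthogonal complement (as a set) in a product space. -/
def orthSet2 (s : Set (E × F)) : Set (E × F) := {v | ∀ w ∈ s, inner2 v w = 0}

/-- The graph of the limiting coderivative of a mapping with graph `Γ` at `z`:
`{(y*, x*) : (x*, -y*) ∈ N_Γ(z)}`. -/
def coderivGraph (Γ : Set (E × F)) (z : E × F) : Set (F × E) :=
  {q | (q.2, -q.1) ∈ limNormal2 Γ z}

/-- The semismooth* property for subsets of a product space (i.e. for mappings). -/
def SemismoothStar2At (Ω : Set (E × F)) (zb : E × F) : Prop :=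
  ∀ ε : ℝ, 0 < ε → ∃ δ > 0, ∀ z ∈ Ω, ‖z - zb‖ < δ → ∀ v ∈ limNormal2 Ω z,
    |inner2 v (z - zb)| ≤ ε * ‖z - zb‖ * ‖v‖

/-- The regular subdifferential of an extended-real-valued function. -/
def regSubdiff (φ : E → EReal) (xb : E) : Set E :=
  {v | φ xb ≠ ⊤ ∧ φ xb ≠ ⊥ ∧ ∀ ε : ℝ, 0 < ε → ∃ δ > 0, ∀ x, ‖x - xb‖ < δ →
      φ xb + ((⟪v, x - xb⟫ - ε * ‖x - xb‖ : ℝ) : EReal) ≤ φ x}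

/-- The limiting (Mordukhovich) subdifferential. -/
def limSubdiff (φ : E → EReal) (xb : E) : Set E :=
  {v | ∃ xk vk : ℕ → E, Tendsto xk atTop (𝓝 xb) ∧
      Tendsto (fun k => φ (xk k)) atTop (𝓝 (φ xb)) ∧
      (∀ k, vk k ∈ regSubdiff φ (xk k)) ∧ Tendsto vk atTop (𝓝 v)}

/-- `φ` is prox-regular at `xb` for `vb` with parameters `r ≥ 0` and `ε > 0`. -/
def ProxRegular (φ : E → EReal) (xb vb : E) (r ε : ℝ) : Prop :=
  ∀ x' x v, ‖x' - xb‖ < ε → v ∈ limSubdiff φ x → ‖x - xb‖ < ε → ‖v - vb‖ < ε →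
    φ x < φ xb + (ε : EReal) →
    φ x + ((⟪v, x' - x⟫ - r / 2 * ‖x' - x‖ ^ 2 : ℝ) : EReal) ≤ φ x'

/-- The graph of the `φ`-attentive `ε`-localization of `∂φ` around `(xb, vb)`. -/
def attLocGraph (φ : E → EReal) (xb vb : E) (ε : ℝ) : Set (E × E) :=
  {p | p.2 ∈ limSubdiff φ p.1 ∧ ‖p.1 - xb‖ < ε ∧ ‖p.2 - vb‖ < ε ∧
      φ p.1 < φ xb + (ε : EReal)}

end InnerDefs

/-- The map `ℝⁿ → ℝᵈ × ℝᶜ` obtained from a permutation (re-indexing) of the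
coordinates followed by splitting them into the first `d` and the last `c` ones. -/
def permSplit {n d c : ℕ} (e : Fin n ≃ (Fin d ⊕ Fin c)) (z : Euc n) : Euc d × Euc c :=
  (show Euc d from WithLp.toLp 2 (fun i => z (e.symm (Sum.inl i))),
   show Euc c from WithLp.toLp 2 (fun j => z (e.symm (Sum.inr j))))

section Normed

variable {X Y : Type*} [NormedAddCommGroup X] [NormedAddCommGroup Y]

lemma LipschitzOnWith.eventually_norm_sub_le {f : X → Y} {s : Set X} {x : X} {K : ℝ≥0}
    (hf : LipschitzOnWith K f s) (hs : s ∈ 𝓝 x) :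
    ∀ᶠ x' in 𝓝 x, ‖f x' - f x‖ ≤ K * ‖x' - x‖ := by
  filter_upwards [hs] with x' hx'
  simpa [dist_eq_norm] using hf.dist_le_mul x' hx' x (mem_of_mem_nhds hs)

lemma StrictlyContinuousAt'.exists_lipschitzOnWith {f : X → Y} {U : Set X} {x : X}
    (hf : StrictlyContinuousAt' f U x) :
    ∃ K : ℝ≥0, ∃ s ∈ 𝓝 x, s ⊆ U ∧ LipschitzOnWith K f s := by
  obtain ⟨s, hs, hsU, κ, -, hκ⟩ := hf
  exact ⟨_, s, hs, hsU, LipschitzOnWith.of_dist_le' fun x hx y hy => by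
    simpa [dist_eq_norm] using hκ x hx y hy⟩

lemma CalmAt'.exists_eventually_norm_sub_le {f : X → Y} {U : Set X} {x : X}
    (hf : CalmAt' f U x) :
    ∃ K : ℝ≥0, U ∈ 𝓝 x ∧ ∀ᶠ x' in 𝓝 x, ‖f x' - f x‖ ≤ K * ‖x' - x‖ := by
  obtain ⟨s, hs, hsU, κ, hκ, hcalm⟩ := hf
  exact ⟨⟨κ, hκ⟩, mem_of_superset hs hsU, eventually_of_mem hs hcalm⟩

lemma isClosed_setOf_norm_snd_le (K : ℝ) : IsClosed {w : X × Y | ‖w.2‖ ≤ K * ‖w.1‖} :=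
  isClosed_le continuous_snd.norm (continuous_fst.norm.const_mul K)

variable [NormedSpace ℝ X] [NormedSpace ℝ Y]

lemma mem_tanCone_of_eventually {Ω : Set X} {z w : X} {t : ℕ → ℝ} {wk : ℕ → X}
    (ht : ∀ k, 0 < t k) (ht0 : Tendsto t atTop (𝓝 0)) (hw : Tendsto wk atTop (𝓝 w))
    (hmem : ∀ᶠ k in atTop, z + t k • wk k ∈ Ω) : w ∈ tanCone Ω z := by
  obtain ⟨N, hN⟩ := eventually_atTop.1 hmem
  exact ⟨fun k => t (k + N), fun k => wk (k + N), fun k => ht _,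
    ht0.comp (tendsto_add_atTop_nat N), hw.comp (tendsto_add_atTop_nat N),
    fun k => hN _ (Nat.le_add_left N k)⟩

lemma tanCone_subset_paraCone {Ω : Set X} {z : X} (hz : z ∈ Ω) :
    tanCone Ω z ⊆ paraCone Ω z := by
  rintro w ⟨t, wk, ht, ht0, hw, hmem⟩
  exact ⟨fun _ => z, t, wk, fun _ => hz, tendsto_const_nhds, ht, ht0, hw, hmem⟩

lemma norm_snd_le_of_add_smul_mem_gphOn {f : X → Y} {U : Set X} {p w : X × Y} {t : ℝ}
    {K : ℝ} (ht : 0 < t) (hp : p.2 = f p.1) (hpw : p + t • w ∈ gphOn f U)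
    (hf : ‖f (p.1 + t • w.1) - f p.1‖ ≤ K * ‖t • w.1‖) : ‖w.2‖ ≤ K * ‖w.1‖ := by
  have hslope : f (p.1 + t • w.1) - f p.1 = t • w.2 := by
    rw [← hp, show f (p.1 + t • w.1) = p.2 + t • w.2 from hpw.2.symm]
    abel
  rw [hslope, norm_smul, norm_smul, Real.norm_of_nonneg ht.le, mul_left_comm] at hf
  exact le_of_mul_le_mul_left hf ht

lemma norm_snd_le_of_mem_paraCone_gphOn {f : X → Y} {U s : Set X} {x : X} {K : ℝ≥0}
    (hs : s ∈ 𝓝 x) (hf : LipschitzOnWith K f s) {w : X × Y}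
    (hw : w ∈ paraCone (gphOn f U) (x, f x)) : ‖w.2‖ ≤ K * ‖w.1‖ := by
  obtain ⟨zk, t, wk, hz, hzt, ht, ht0, hwt, hzw⟩ := hw
  have hzwt : Tendsto (fun k => zk k + t k • wk k) atTop (𝓝 (x, f x)) := by
    simpa using hzt.add (ht0.smul hwt)
  refine (isClosed_setOf_norm_snd_le _).mem_of_tendsto hwt ?_
  filter_upwards [hzt.fst_nhds.eventually_mem hs, hzwt.fst_nhds.eventually_mem hs] with k h h'
  refine norm_snd_le_of_add_smul_mem_gphOn (ht k) (hz k).2 (hzw k) ?_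
  simpa [dist_eq_norm] using hf.dist_le_mul _ h' _ h

lemma norm_snd_le_of_mem_tanCone_gphOn {f : X → Y} {U : Set X} {x : X} {K : ℝ≥0}
    (hcalm : ∀ᶠ x' in 𝓝 x, ‖f x' - f x‖ ≤ K * ‖x' - x‖) {w : X × Y}
    (hw : w ∈ tanCone (gphOn f U) (x, f x)) : ‖w.2‖ ≤ K * ‖w.1‖ := by
  obtain ⟨t, wk, ht, ht0, hwt, hzw⟩ := hw
  have hxt : Tendsto (fun k => x + t k • (wk k).1) atTop (𝓝 x) := by
    simpa using tendsto_const_nhds.add (ht0.smul hwt.fst_nhds)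
  refine (isClosed_setOf_norm_snd_le _).mem_of_tendsto hwt ?_
  filter_upwards [hxt.eventually hcalm] with k hk
  exact norm_snd_le_of_add_smul_mem_gphOn (ht k) rfl (hzw k) (by simpa using hk)

lemma exists_mem_tanCone_gphOn [ProperSpace Y] {f : X → Y} {U : Set X} {x : X} {K : ℝ≥0}
    (hU : U ∈ 𝓝 x) (hcalm : ∀ᶠ x' in 𝓝 x, ‖f x' - f x‖ ≤ K * ‖x' - x‖) (u : X) :
    ∃ w : Y, ‖w‖ ≤ K * ‖u‖ ∧ (u, w) ∈ tanCone (gphOn f U) (x, f x) := by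
  set t : ℕ → ℝ := fun k => 1 / ((k : ℝ) + 1)
  have ht : ∀ k, 0 < t k := fun k => Nat.one_div_pos_of_nat
  have ht0 : Tendsto t atTop (𝓝 0) := tendsto_one_div_add_atTop_nhds_zero_nat
  set q : ℕ → Y := fun k => (t k)⁻¹ • (f (x + t k • u) - f x)
  have hxt : Tendsto (fun k => x + t k • u) atTop (𝓝 x) := by
    simpa using tendsto_const_nhds.add (ht0.smul_const u)
  have hnear := (hxt.eventually_mem hU).and (hxt.eventually hcalm)
  have hq : ∀ᶠ k in atTop, q k ∈ closedBall 0 (K * ‖u‖) := by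
    filter_upwards [hnear] with k hk
    rw [mem_closedBall_zero_iff, norm_smul, norm_inv, Real.norm_of_nonneg (ht k).le,
      inv_mul_le_iff₀ (ht k), mul_left_comm]
    simpa [norm_smul, abs_of_pos (ht k)] using hk.2
  obtain ⟨w, hw, φ, hφ, hqφ⟩ :=
    tendsto_subseq_of_frequently_bounded isBounded_closedBall hq.frequently
  refine ⟨w, by simpa using hw, mem_tanCone_of_eventually (fun k => ht (φ k))
    (ht0.comp hφ.tendsto_atTop) (tendsto_const_nhds.prodMk_nhds hqφ) ?_⟩
  filter_upwards [hφ.tendsto_atTop.eventually hnear] with k hk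
  refine ⟨hk.1, ?_⟩
  simp [q, smul_smul, mul_inv_cancel₀ (ht (φ k)).ne']

lemma IsLinearSubspace.hasDim_and_eq_graph_of_norm_snd_le {s : Set (X × Y)} {K : ℝ}
    (hs : IsLinearSubspace s)
    (hbound : ∀ p ∈ s, ‖p.2‖ ≤ K * ‖p.1‖) (hsurj : ∀ x, ∃ y, (x, y) ∈ s) :
    HasDim s (Module.finrank ℝ X) ∧ ∃ A : X →ₗ[ℝ] Y, s = {p | p.2 = A p.1} := by
  obtain ⟨S, rfl⟩ := hs
  set L : S →ₗ[ℝ] X := (LinearMap.fst ℝ X Y).comp S.subtype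
  have hinj : Function.Injective L := by
    rw [← LinearMap.ker_eq_bot, eq_bot_iff]
    intro p hp
    have h1 : (p : X × Y).1 = 0 := hp
    have h2 : (p : X × Y).2 = 0 := norm_le_zero_iff.1 (by simpa [h1] using hbound p p.2)
    exact (Submodule.mem_bot ℝ).2 (Subtype.ext (Prod.ext h1 h2))
  have hsurj' : Function.Surjective L := fun x =>
    let ⟨y, hy⟩ := hsurj x
    ⟨⟨(x, y), hy⟩, rfl⟩
  set e : S ≃ₗ[ℝ] X := LinearEquiv.ofBijective L ⟨hinj, hsurj'⟩
  refine ⟨⟨S, rfl, e.finrank_eq⟩,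
    (LinearMap.snd ℝ X Y).comp S.subtype ∘ₗ e.symm.toLinearMap, Set.ext fun p => ?_⟩
  have he : ∀ q : S, (q : X × Y).1 = e q := fun _ => rfl
  constructor
  · intro hp
    have : e.symm p.1 = ⟨p, hp⟩ := e.symm_apply_eq.2 rfl
    simp [this]
  · intro hp
    have hp' : p = e.symm p.1 := Prod.ext (by rw [he, e.apply_symm_apply]) hp
    rw [SetLike.mem_coe, hp']
    exact (e.symm p.1).2

end Normed

lemma le_of_sq_le_mul {a c : ℝ} (ha : 0 ≤ a) (hc : 0 ≤ c) (h : a ^ 2 ≤ c * a) : a ≤ c := by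
  rcases ha.eq_or_lt with rfl | ha
  · exact hc
  · exact le_of_mul_le_mul_right (by rwa [sq] at h) ha

section Inner

variable {E F : Type*} [NormedAddCommGroup E] [InnerProductSpace ℝ E]
  [NormedAddCommGroup F] [InnerProductSpace ℝ F]

lemma norm_fst_le_of_mem_regNormal2_gphOn [ProperSpace F] {f : E → F} {U : Set E} {x : E}
    {K : ℝ≥0} (hU : U ∈ 𝓝 x) (hcalm : ∀ᶠ x' in 𝓝 x, ‖f x' - f x‖ ≤ K * ‖x' - x‖)
    {q : E × F} (hq : q ∈ regNormal2 (gphOn f U) (x, f x)) : ‖q.1‖ ≤ K * ‖q.2‖ := by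
  obtain ⟨w, hw, hwt⟩ := exists_mem_tanCone_gphOn hU hcalm q.1
  have hpolar : ‖q.1‖ ^ 2 + ⟪q.2, w⟫ ≤ 0 := by
    simpa [inner2, real_inner_self_eq_norm_sq] using hq _ hwt
  have : ‖q.1‖ ^ 2 ≤ K * ‖q.2‖ * ‖q.1‖ :=
    calc ‖q.1‖ ^ 2 ≤ -⟪q.2, w⟫ := by linarith
      _ ≤ ‖q.2‖ * ‖w‖ := (neg_le_abs _).trans (abs_real_inner_le_norm _ _)
      _ ≤ ‖q.2‖ * (K * ‖q.1‖) := by gcongr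
      _ = K * ‖q.2‖ * ‖q.1‖ := by ring
  exact le_of_sq_le_mul (norm_nonneg _) (by positivity) this

lemma norm_fst_le_of_mem_limNormal2_gphOn [ProperSpace F] {f : E → F} {U s : Set E} {x : E}
    {K : ℝ≥0} (hs : s ∈ 𝓝 x) (hsU : s ⊆ U) (hf : LipschitzOnWith K f s) {q : E × F}
    (hq : q ∈ limNormal2 (gphOn f U) (x, f x)) : ‖q.1‖ ≤ K * ‖q.2‖ := by
  obtain ⟨zk, qk, hz, hzt, hqk, hqt⟩ := hq
  refine (isClosed_le continuous_fst.norm (continuous_snd.norm.const_mul _)).mem_of_tendsto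
    hqt ?_
  filter_upwards [hzt.fst_nhds.eventually (eventually_mem_nhds_iff.2 hs)] with k hk
  have hqk' := hqk k
  rw [show zk k = ((zk k).1, f (zk k).1) from Prod.ext rfl (hz k).2] at hqk'
  exact norm_fst_le_of_mem_regNormal2_gphOn (mem_of_superset hk hsU)
    (hf.eventually_norm_sub_le hk) hqk'

lemma mem_regNormal2_gphOn_of_isLocalMin {f : E → F} {U : Set E} {h : E → ℝ} {g x0 : E}
    {ys : F} (hh : HasFDerivAt h (innerSL ℝ g) x0)
    (hmin : IsLocalMin (fun x => ⟪ys, f x⟫ + h x) x0) :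
    (-g, -ys) ∈ regNormal2 (gphOn f U) (x0, f x0) := by
  rintro ⟨u, w⟩ ⟨t, wk, ht, ht0, hwt, hmem⟩
  have hd : Tendsto (fun k => t k • (wk k).1) atTop (𝓝 0) := by
    simpa using ht0.smul hwt.fst_nhds
  have hquot : Tendsto (fun k => (t k)⁻¹ * (h (x0 + t k • (wk k).1) - h x0)) atTop
      (𝓝 ⟪g, u⟫) := by
    refine (hasFDerivWithinAt_univ.2 hh).lim hd (.of_forall fun _ => mem_univ _) ?_
    refine hwt.fst_nhds.congr' (.of_forall fun k => ?_)
    simp [smul_smul, inv_mul_cancel₀ (ht k).ne']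
  have hnonneg : ∀ᶠ k in atTop,
      0 ≤ ⟪ys, (wk k).2⟫ + (t k)⁻¹ * (h (x0 + t k • (wk k).1) - h x0) := by
    have hxt : Tendsto (fun k => x0 + t k • (wk k).1) atTop (𝓝 x0) := by
      simpa using tendsto_const_nhds.add hd
    filter_upwards [hxt.eventually hmin] with k hk
    rw [show f (x0 + t k • (wk k).1) = f x0 + t k • (wk k).2 from (hmem k).2.symm,
      inner_add_right, real_inner_smul_right] at hk
    have hscaled :
        0 ≤ t k * (⟪ys, (wk k).2⟫ + (t k)⁻¹ * (h (x0 + t k • (wk k).1) - h x0)) := by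
      rw [mul_add, ← mul_assoc, mul_inv_cancel₀ (ht k).ne', one_mul]
      linarith
    exact nonneg_of_mul_nonneg_right hscaled (ht k)
  have hlim := ge_of_tendsto ((tendsto_const_nhds.inner hwt.snd_nhds).add hquot) hnonneg
  simp only [inner2, inner_neg_left]
  linarith

lemma exists_mem_regNormal2_gphOn_of_penalty [ProperSpace E] {f : E → F} {U : Set E}
    {xb : E} {ys : F} {K : ℝ≥0} {ρ δ : ℝ} (hf : LipschitzOnWith K f (closedBall xb ρ))
    (hδ : 0 < δ) (hδρ : δ * (K * ‖ys‖) < ρ) :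
    ∃ x0, ‖x0 - xb‖ ≤ δ * (K * ‖ys‖) ∧
      ((2 / δ) • (xb - x0), -ys) ∈ regNormal2 (gphOn f U) (x0, f x0) := by
  set φ : E → ℝ := fun x => ⟪ys, f x⟫ + δ⁻¹ * ‖x - xb‖ ^ 2
  have hxb : xb ∈ closedBall xb ρ :=
    mem_closedBall_self ((by positivity : 0 ≤ δ * (K * ‖ys‖)).trans hδρ.le)
  have hφ : ContinuousOn φ (closedBall xb ρ) :=
    (continuousOn_const.inner hf.continuousOn).add (Continuous.continuousOn (by fun_prop))
  obtain ⟨x0, hx0, hmin⟩ := (isCompact_closedBall xb ρ).exists_isMinOn ⟨xb, hxb⟩ hφ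
  -- comparing with `φ xb`: `‖x0 - xb‖² / δ ≤ ⟪y*, f xb - f x0⟫ ≤ K ‖y*‖ ‖x0 - xb‖`
  have hdist : ‖x0 - xb‖ ≤ δ * (K * ‖ys‖) := by
    have hmin' : φ x0 ≤ φ xb := hmin hxb
    have hlip : ⟪ys, f xb - f x0⟫ ≤ ‖ys‖ * (K * ‖x0 - xb‖) := by
      refine (real_inner_le_norm _ _).trans (mul_le_mul_of_nonneg_left ?_ (norm_nonneg _))
      simpa [dist_eq_norm, norm_sub_rev] using hf.dist_le_mul xb hxb x0 hx0
    simp only [φ, sub_self, norm_zero, inner_sub_right] at hmin' hlip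
    have : ‖x0 - xb‖ ^ 2 ≤ δ * (K * ‖ys‖) * ‖x0 - xb‖ := by
      have := mul_le_mul_of_nonneg_left
        (by linarith : δ⁻¹ * ‖x0 - xb‖ ^ 2 ≤ ‖ys‖ * (K * ‖x0 - xb‖)) hδ.le
      rw [← mul_assoc, mul_inv_cancel₀ hδ.ne', one_mul] at this
      linarith
    exact le_of_sq_le_mul (norm_nonneg _) (by positivity) this
  have hloc : IsLocalMin φ x0 := hmin.isLocalMin (closedBall_mem_nhds_of_mem
    (mem_ball_iff_norm.2 (hdist.trans_lt hδρ)))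
  have hderiv : HasFDerivAt (fun x => δ⁻¹ * ‖x - xb‖ ^ 2)
      (innerSL ℝ ((2 / δ) • (x0 - xb))) x0 := by
    refine ((((hasFDerivAt_id x0).sub_const xb).norm_sq).const_mul δ⁻¹).congr_fderiv ?_
    ext v
    simp
    ring
  refine ⟨x0, hdist, ?_⟩
  simpa [smul_sub, neg_sub] using mem_regNormal2_gphOn_of_isLocalMin (U := U) hderiv hloc

lemma exists_mem_limNormal2_gphOn [ProperSpace E] {f : E → F} {U s : Set E} {xb : E}
    {K : ℝ≥0} (hs : s ∈ 𝓝 xb) (hsU : s ⊆ U) (hf : LipschitzOnWith K f s) (ys : F) :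
    ∃ xs : E, (xs, -ys) ∈ limNormal2 (gphOn f U) (xb, f xb) := by
  obtain ⟨ρ, hρ, hρs⟩ := nhds_basis_closedBall.mem_iff.1 hs
  set c : ℝ := K * ‖ys‖
  set δ : ℕ → ℝ := fun j => ρ / (c + 1) * (1 / ((j : ℝ) + 1))
  have hδ : ∀ j, 0 < δ j := fun j => by positivity
  have hδρ : ∀ j, δ j * c < ρ := fun j =>
    calc δ j * c ≤ ρ / (c + 1) * c := by
          gcongr
          refine mul_le_of_le_one_right (by positivity) ((div_le_one (by positivity)).2 ?_)
          linarith [(j.cast_nonneg : (0 : ℝ) ≤ j)]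
      _ < ρ := by
          rw [div_mul_eq_mul_div, div_lt_iff₀ (by positivity)]
          nlinarith
  choose x0 hx0 hnormal using fun j =>
    exists_mem_regNormal2_gphOn_of_penalty (U := U) (hf.mono hρs) (hδ j) (hδρ j)
  have hx0t : Tendsto x0 atTop (𝓝 xb) := by
    rw [tendsto_iff_norm_sub_tendsto_zero]
    refine squeeze_zero (fun _ => norm_nonneg _) hx0 ?_
    simpa [δ, c] using
      (tendsto_one_div_add_atTop_nhds_zero_nat.const_mul (ρ / (c + 1))).mul_const c
  have hv : ∀ j, (2 / δ j) • (xb - x0 j) ∈ closedBall (0 : E) (2 * c) := fun j => by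
    rw [mem_closedBall_zero_iff, norm_smul, norm_sub_rev,
      Real.norm_of_nonneg (div_pos two_pos (hδ j)).le]
    calc 2 / δ j * ‖x0 j - xb‖ ≤ 2 / δ j * (δ j * c) := by gcongr; exact hx0 j
      _ = 2 * c := by field_simp [(hδ j).ne']
  obtain ⟨xs, -, φ, hφ, hvφ⟩ := tendsto_subseq_of_bounded isBounded_closedBall hv
  have hfx0t : Tendsto (fun j => f (x0 j)) atTop (𝓝 (f xb)) :=
    (hf.continuousOn.continuousAt hs).tendsto.comp hx0t
  refine ⟨xs, fun k => (x0 (φ k), f (x0 (φ k))),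
    fun k => ((2 / δ (φ k)) • (xb - x0 (φ k)), -ys), fun k => ⟨hsU (hρs ?_), rfl⟩,
    (hx0t.prodMk_nhds hfx0t).comp hφ.tendsto_atTop, fun k => hnormal (φ k),
    hvφ.prodMk_nhds tendsto_const_nhds⟩
  rw [mem_closedBall, dist_eq_norm]
  exact (hx0 _).trans (hδρ _).le

end Inner

theorem stmt_3_general {n m : ℕ} (U : Set (Euc n)) (f : Euc n → Euc m)
    (xb : Euc n) :
    (StrictlyContinuousAt' f U xb → IsLinearSubspace (paraCone (gphOn f U) (xb, f xb)) →
      HasDim (paraCone (gphOn f U) (xb, f xb)) n ∧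
      ∃ A : Euc n →ₗ[ℝ] Euc m,
        paraCone (gphOn f U) (xb, f xb) = {p : Euc n × Euc m | p.2 = A p.1}) ∧
    (StrictlyContinuousAt' f U xb → IsLinearSubspace (coderivGraph (gphOn f U) (xb, f xb)) →
      HasDim (coderivGraph (gphOn f U) (xb, f xb)) m ∧
      ∃ A : Euc m →ₗ[ℝ] Euc n,
        coderivGraph (gphOn f U) (xb, f xb) = {q : Euc m × Euc n | q.2 = A q.1}) ∧
    (CalmAt' f U xb → IsLinearSubspace (tanCone (gphOn f U) (xb, f xb)) →
      HasDim (tanCone (gphOn f U) (xb, f xb)) n ∧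
      ∃ A : Euc n →ₗ[ℝ] Euc m,
        tanCone (gphOn f U) (xb, f xb) = {p : Euc n × Euc m | p.2 = A p.1}) := by
  refine ⟨fun hf hlin => ?_, fun hf hlin => ?_, fun hf hlin => ?_⟩
  · obtain ⟨K, s, hs, hsU, hK⟩ := hf.exists_lipschitzOnWith
    have hgraph : (xb, f xb) ∈ gphOn f U := ⟨hsU (mem_of_mem_nhds hs), rfl⟩
    simpa using hlin.hasDim_and_eq_graph_of_norm_snd_le
      (fun _ => norm_snd_le_of_mem_paraCone_gphOn hs hK) fun u =>
      (exists_mem_tanCone_gphOn (mem_of_superset hs hsU) (hK.eventually_norm_sub_le hs) u).imp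
        fun _ hw => tanCone_subset_paraCone hgraph hw.2
  · obtain ⟨K, s, hs, hsU, hK⟩ := hf.exists_lipschitzOnWith
    simpa using hlin.hasDim_and_eq_graph_of_norm_snd_le (K := K)
      (fun _ hq => by simpa using norm_fst_le_of_mem_limNormal2_gphOn hs hsU hK hq) fun ys =>
      (exists_mem_limNormal2_gphOn hs hsU hK ys).imp fun _ h => by simpa [coderivGraph] using h
  · obtain ⟨K, hU, hcalm⟩ := hf.exists_eventually_norm_sub_le
    simpa using hlin.hasDim_and_eq_graph_of_norm_snd_le
      (fun _ => norm_snd_le_of_mem_tanCone_gphOn hcalm) fun u =>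
      (exists_mem_tanCone_gphOn hU hcalm u).imp fun _ hw => hw.2

/-- Lemma 2.7: dimension and single-valued linearity of the strict
derivative, limiting coderivative and graphical derivative of single-valued mappings. -/
theorem stmt_3 {n m : ℕ} (U : Set (Euc n)) (hU : IsOpen U) (f : Euc n → Euc m)
    (xb : Euc n) (hx : xb ∈ U) :
    (StrictlyContinuousAt' f U xb → IsLinearSubspace (paraCone (gphOn f U) (xb, f xb)) →
      HasDim (paraCone (gphOn f U) (xb, f xb)) n ∧
      ∃ A : Euc n →ₗ[ℝ] Euc m,
        paraCone (gphOn f U) (xb, f xb) = {p : Euc n × Euc m | p.2 = A p.1}) ∧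
    (StrictlyContinuousAt' f U xb → IsLinearSubspace (coderivGraph (gphOn f U) (xb, f xb)) →
      HasDim (coderivGraph (gphOn f U) (xb, f xb)) m ∧
      ∃ A : Euc m →ₗ[ℝ] Euc n,
        coderivGraph (gphOn f U) (xb, f xb) = {q : Euc m × Euc n | q.2 = A q.1}) ∧
    (CalmAt' f U xb → IsLinearSubspace (tanCone (gphOn f U) (xb, f xb)) →
      HasDim (tanCone (gphOn f U) (xb, f xb)) n ∧
      ∃ A : Euc n →ₗ[ℝ] Euc m,
        tanCone (gphOn f U) (xb, f xb) = {p : Euc n × Euc m | p.2 = A p.1}) :=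
  stmt_3_general U f xb
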